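/- arXiv:2601.10279 — 3 statements merged into one kernel-verified Lean document; each statement's English description precedes it below -/
import Mathlib

section
/- Let A be an m×m real matrix, D a k×k real matrix, B an m×k real matrix, and suppose Σ = fromBlocks A B Bᵀ D is positive definite. Let μ₁ ∈ ℝ^m, μ₂ ∈ ℝ^k, μ = (μ₁, μ₂), and α = μ₂ − Bᵀ A⁻¹ μ₁. Then μ₁ᵀ A⁻¹ μ₁ ≤ μᵀ Σ⁻¹ μ, with equality if and only if α = 0. In particular, a factor model attains the maximal squared Sharpe ratio of the full asset universe (is efficient) if and only if all spanning-regression alphas of the excluded assets are zero. -/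
/-!
Writing `S = D - Bᵀ A⁻¹ B` for the Schur complement, the block inversion formula gives
`μᵀ Σ⁻¹ μ = μ₁ᵀ A⁻¹ μ₁ + αᵀ S⁻¹ α`. The Schur complement inherits positive definiteness
from `Σ` (its inverse is the lower-right block of `Σ⁻¹`), so the second summand is nonnegative
and vanishes exactly when `α = 0`.
-/

open Matrix

namespace Matrix

variable {m n : Type*}

theorem sumElim_dotProduct_inv_fromBlocks_mulVec_sumElim {α : Type*} [CommRing α]
    [Fintype m] [Fintype n] [DecidableEq m] [DecidableEq n]
    {A : Matrix m m α} (B : Matrix m n α) (D : Matrix n n α)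
    (hA : A.IsSymm) [Invertible A] [Invertible (D - Bᵀ * A⁻¹ * B)] (u : m → α) (v : n → α) :
    Sum.elim u v ⬝ᵥ ((fromBlocks A B Bᵀ D)⁻¹ *ᵥ Sum.elim u v) =
      u ⬝ᵥ (A⁻¹ *ᵥ u) +
        (v - Bᵀ *ᵥ (A⁻¹ *ᵥ u)) ⬝ᵥ ((D - Bᵀ * A⁻¹ * B)⁻¹ *ᵥ (v - Bᵀ *ᵥ (A⁻¹ *ᵥ u))) := by
  have hcomm (w : n → α) : u ⬝ᵥ (A⁻¹ *ᵥ (B *ᵥ w)) = (Bᵀ *ᵥ (A⁻¹ *ᵥ u)) ⬝ᵥ w := by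
    have hsymm : u ᵥ* A⁻¹ = A⁻¹ *ᵥ u := by rw [← vecMul_transpose, hA.inv.eq]
    rw [mulVec_mulVec, dotProduct_mulVec, ← vecMul_vecMul, hsymm, mulVec_transpose]
  let : Invertible (D - Bᵀ * ⅟A * B) := by rwa [invOf_eq_nonsing_inv]
  let := fromBlocks₁₁Invertible A B Bᵀ D
  rw [← invOf_eq_nonsing_inv (fromBlocks A B Bᵀ D), invOf_fromBlocks₁₁_eq]
  simp only [invOf_eq_nonsing_inv, fromBlocks_mulVec, sumElim_dotProduct_sumElim,
    Sum.elim_comp_inl, Sum.elim_comp_inr, add_mulVec, neg_mulVec, dotProduct_add, dotProduct_neg,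
    mulVec_sub, dotProduct_sub, sub_dotProduct, ← mulVec_mulVec, hcomm]
  ring

namespace PosDef

variable {R : Type*} [Ring R] [PartialOrder R] [StarRing R]

theorem dotProduct_mulVec_eq_zero_iff [Fintype n] {M : Matrix n n R} (hM : M.PosDef)
    {x : n → R} :
    star x ⬝ᵥ (M *ᵥ x) = 0 ↔ x = 0 :=
  ⟨fun h ↦ by_contra fun hx ↦ (hM.dotProduct_mulVec_pos hx).ne' h, by rintro rfl; simp⟩

theorem toBlocks₁₁ {M : Matrix (m ⊕ n) (m ⊕ n) R} (hM : M.PosDef) : M.toBlocks₁₁.PosDef :=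
  hM.submatrix Sum.inl_injective

theorem toBlocks₂₂ {M : Matrix (m ⊕ n) (m ⊕ n) R} (hM : M.PosDef) : M.toBlocks₂₂.PosDef :=
  hM.submatrix Sum.inr_injective

theorem schurComplement_fromBlocks₁₁ {K : Type*} [Field K] [PartialOrder K] [StarRing K]
    [Fintype m] [Fintype n] [DecidableEq m] [DecidableEq n]
    {A : Matrix m m K} {B : Matrix m n K} {C : Matrix n m K} {D : Matrix n n K}
    (hM : (fromBlocks A B C D).PosDef) : (D - C * A⁻¹ * B).PosDef := by
  let : Invertible A := (by simpa using hM.toBlocks₁₁ : A.PosDef).isUnit.invertible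
  let := hM.isUnit.invertible
  let := invertibleOfFromBlocks₁₁Invertible A B C D
  have hInvBlock := hM.inv.toBlocks₂₂
  rw [← invOf_eq_nonsing_inv, invOf_fromBlocks₁₁_eq, toBlocks_fromBlocks₂₂] at hInvBlock
  simpa only [invOf_eq_nonsing_inv, posDef_inv_iff] using hInvBlock

end PosDef

end Matrix

/-- **Efficiency iff zero alphas.**
With covariance `S = fromBlocks A B Bᵀ D` positive definite, means `μ = (μ₁, μ₂)` and
spanning-regression alphas `α = μ₂ − Bᵀ A⁻¹ μ₁`, the sub-model squared Sharpe ratio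
`μ₁ᵀ A⁻¹ μ₁` never exceeds the full one `μᵀ S⁻¹ μ`, with equality iff `α = 0`. -/
theorem submodel_sharpe_le_and_eq_iff_alpha_zero {m k : ℕ}
    (A : Matrix (Fin m) (Fin m) ℝ) (D : Matrix (Fin k) (Fin k) ℝ)
    (B : Matrix (Fin m) (Fin k) ℝ)
    (hPD : (Matrix.fromBlocks A B Bᵀ D).PosDef)
    (μ₁ : Fin m → ℝ) (μ₂ : Fin k → ℝ) :
    let μ : Fin m ⊕ Fin k → ℝ := Sum.elim μ₁ μ₂
    let α : Fin k → ℝ := μ₂ - Bᵀ *ᵥ (A⁻¹ *ᵥ μ₁)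
    μ₁ ⬝ᵥ (A⁻¹ *ᵥ μ₁) ≤ μ ⬝ᵥ ((Matrix.fromBlocks A B Bᵀ D)⁻¹ *ᵥ μ) ∧
      (μ₁ ⬝ᵥ (A⁻¹ *ᵥ μ₁) = μ ⬝ᵥ ((Matrix.fromBlocks A B Bᵀ D)⁻¹ *ᵥ μ) ↔ α = 0) := by
  intro μ α
  have hA : A.PosDef := by simpa using hPD.toBlocks₁₁
  have hS := hPD.schurComplement_fromBlocks₁₁
  let := hA.isUnit.invertible
  let := hS.isUnit.invertible
  have hdecomp : μ ⬝ᵥ ((fromBlocks A B Bᵀ D)⁻¹ *ᵥ μ) =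
      μ₁ ⬝ᵥ (A⁻¹ *ᵥ μ₁) + α ⬝ᵥ ((D - Bᵀ * A⁻¹ * B)⁻¹ *ᵥ α) :=
    sumElim_dotProduct_inv_fromBlocks_mulVec_sumElim B D
      (isHermitian_iff_isSymm.mp hA.isHermitian) μ₁ μ₂
  have hnonneg := hS.inv.posSemidef.dotProduct_mulVec_nonneg α
  have hzero := hS.inv.dotProduct_mulVec_eq_zero_iff (x := α)
  rw [star_trivial] at hnonneg hzero
  rw [hdecomp, left_eq_add, hzero]
  exact ⟨le_add_of_nonneg_right hnonneg, Iff.rfl⟩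
end

section
/- Let ι be a (nonempty) finite index type, Σ : Matrix ι ι ℝ positive definite, and μ : ι → ℝ. For every subset S of ι, the principal submatrix Σ_S (obtained by restricting rows and columns of Σ to S via the inclusion) is positive definite, and the sub-model Sharpe ratios are monotone: for all subsets S ⊆ S' of ι, 0 ≤ SR²(S) ≤ SR²(S') ≤ SR²(ι), where SR²(S) := μ_Sᵀ (Σ_S)⁻¹ μ_S and μ_S is the restriction of μ to S. In particular, every candidate factor model has maximal squared Sharpe ratio at most that of the full candidate universe. -/
open Matrix

/-- The maximal squared Sharpe ratio of the sub-model indexed by the subset `S`: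
`SR²(S) = μ_Sᵀ (Σ_S)⁻¹ μ_S` where `Σ_S` is the principal submatrix of the covariance
matrix on `S` and `μ_S` the corresponding subvector of means. -/
noncomputable def subSR {ι : Type*} [Fintype ι] [DecidableEq ι]
    (C : Matrix ι ι ℝ) (μ : ι → ℝ) (S : Finset ι) : ℝ :=
  (fun i : S => μ i) ⬝ᵥ
    ((C.submatrix (fun i : S => (i : ι)) (fun i : S => (i : ι)))⁻¹ *ᵥ fun i : S => μ i)

/-!
`μᵀ C⁻¹ μ` is the maximum of `2 μ ⬝ᵥ y - yᵀ C y` over all `y`. Restricting `μ` and `C` to `S`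
amounts to maximising only over the `y` supported on `S`, so it can only lower the value;
nonnegativity holds because `(Σ_S)⁻¹` is again positive definite.
-/

namespace Matrix

variable {m n : Type*} [Fintype m] [Fintype n] [DecidableEq m] [DecidableEq n]

theorem mulVec_nonsing_inv_mulVec {α : Type*} [CommRing α] {A : Matrix n n α}
    (hA : IsUnit A.det) (v : n → α) : A *ᵥ (A⁻¹ *ᵥ v) = v := by
  rw [mulVec_mulVec, mul_nonsing_inv A hA, one_mulVec]

theorem PosDef.two_mul_dotProduct_sub_le {C : Matrix n n ℝ} (hC : C.PosDef) (μ y : n → ℝ) :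
    2 * (μ ⬝ᵥ y) - y ⬝ᵥ (C *ᵥ y) ≤ μ ⬝ᵥ (C⁻¹ *ᵥ μ) := by
  set w := C⁻¹ *ᵥ μ
  have hCw : C *ᵥ w = μ := mulVec_nonsing_inv_mulVec ((isUnit_iff_isUnit_det C).mp hC.isUnit) _
  have hCt : Cᵀ = C := (isHermitian_iff_isSymm.mp hC.isHermitian).eq
  have hwCy : w ⬝ᵥ (C *ᵥ y) = μ ⬝ᵥ y := by
    rw [dotProduct_mulVec, ← mulVec_transpose, hCt, hCw]
  -- completing the square: the gap is `(y - w)ᵀ C (y - w)`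
  have hsq := hC.posSemidef.dotProduct_mulVec_nonneg (y - w)
  rw [star_trivial, mulVec_sub, hCw, dotProduct_sub, sub_dotProduct, sub_dotProduct, hwCy,
    dotProduct_comm y μ, dotProduct_comm w μ] at hsq
  linarith

theorem PosDef.dotProduct_inv_transpose_mul_mul_le {C : Matrix n n ℝ} (hC : C.PosDef)
    (B : Matrix n m ℝ) (hB : IsUnit (Bᵀ * C * B).det) (μ : n → ℝ) :
    (Bᵀ *ᵥ μ) ⬝ᵥ ((Bᵀ * C * B)⁻¹ *ᵥ (Bᵀ *ᵥ μ)) ≤ μ ⬝ᵥ (C⁻¹ *ᵥ μ) := by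
  set x := (Bᵀ * C * B)⁻¹ *ᵥ (Bᵀ *ᵥ μ)
  have hx : (Bᵀ * C * B) *ᵥ x = Bᵀ *ᵥ μ := mulVec_nonsing_inv_mulVec hB _
  have hμBx : μ ⬝ᵥ (B *ᵥ x) = (Bᵀ *ᵥ μ) ⬝ᵥ x := by
    rw [dotProduct_mulVec, mulVec_transpose]
  have hBxCBx : (B *ᵥ x) ⬝ᵥ (C *ᵥ (B *ᵥ x)) = (Bᵀ *ᵥ μ) ⬝ᵥ x := by
    rw [← hx, dotProduct_comm, ← mulVec_mulVec, ← mulVec_mulVec, mulVec_transpose,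
      ← dotProduct_mulVec]
  calc (Bᵀ *ᵥ μ) ⬝ᵥ x = 2 * (μ ⬝ᵥ (B *ᵥ x)) - (B *ᵥ x) ⬝ᵥ (C *ᵥ (B *ᵥ x)) := by
        rw [hμBx, hBxCBx]; ring
    _ ≤ μ ⬝ᵥ (C⁻¹ *ᵥ μ) := hC.two_mul_dotProduct_sub_le μ (B *ᵥ x)

theorem PosDef.dotProduct_inv_submatrix_le {C : Matrix n n ℝ} (hC : C.PosDef) {f : m → n}
    (hf : Function.Injective f) (μ : n → ℝ) :
    (μ ∘ f) ⬝ᵥ ((C.submatrix f f)⁻¹ *ᵥ (μ ∘ f)) ≤ μ ⬝ᵥ (C⁻¹ *ᵥ μ) := by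
  set B := (1 : Matrix n n ℝ).submatrix id f
  have hCB : Bᵀ * C * B = C.submatrix f f := by ext; simp [B, mul_apply, one_apply]
  have hμB : Bᵀ *ᵥ μ = μ ∘ f := by ext; simp [B, mulVec, dotProduct, one_apply]
  have hdet : IsUnit (Bᵀ * C * B).det := hCB ▸ (isUnit_iff_isUnit_det _).mp (hC.submatrix hf).isUnit
  simpa only [hCB, hμB] using hC.dotProduct_inv_transpose_mul_mul_le B hdet μ

end Matrix

section subSR

variable {ι : Type*} [Fintype ι] [DecidableEq ι] {C : Matrix ι ι ℝ}

theorem subSR_nonneg (hC : C.PosDef) (μ : ι → ℝ) (S : Finset ι) : 0 ≤ subSR C μ S := by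
  simpa [subSR, star_trivial] using
    (hC.submatrix Subtype.val_injective).inv.posSemidef.dotProduct_mulVec_nonneg
      (fun i : S => μ i)

theorem subSR_mono (hC : C.PosDef) (μ : ι → ℝ) {S S' : Finset ι} (h : S ⊆ S') :
    subSR C μ S ≤ subSR C μ S' := by
  have key := (hC.submatrix Subtype.val_injective).dotProduct_inv_submatrix_le
    (Set.inclusion_injective (s := (S : Set ι)) (t := S') h) (fun i : S' => μ i)
  rwa [submatrix_submatrix] at key

theorem subSR_le (hC : C.PosDef) (μ : ι → ℝ) (S : Finset ι) :
    subSR C μ S ≤ μ ⬝ᵥ (C⁻¹ *ᵥ μ) :=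
  hC.dotProduct_inv_submatrix_le Subtype.val_injective μ

end subSR

theorem subSR_monotone_general {ι : Type*} [Fintype ι] [DecidableEq ι]
    (C : Matrix ι ι ℝ) (hPD : C.PosDef) (μ : ι → ℝ) :
    (∀ S : Finset ι,
      (C.submatrix (fun i : S => (i : ι)) (fun i : S => (i : ι))).PosDef) ∧
    (∀ S S' : Finset ι, S ⊆ S' →
      0 ≤ subSR C μ S ∧ subSR C μ S ≤ subSR C μ S' ∧
        subSR C μ S' ≤ μ ⬝ᵥ (C⁻¹ *ᵥ μ)) :=
  ⟨fun _ => hPD.submatrix Subtype.val_injective, fun S S' h =>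
    ⟨subSR_nonneg hPD μ S, subSR_mono hPD μ h, subSR_le hPD μ S'⟩⟩

/-- **Positive definiteness of principal submatrices and monotonicity of Sharpe ratios.**
For a positive definite covariance `C` on a nonempty finite index type `ι` and means `μ`,
every principal submatrix is positive definite, and for `S ⊆ S'`,
`0 ≤ SR²(S) ≤ SR²(S') ≤ SR²(ι)`. -/
theorem subSR_monotone {ι : Type*} [Fintype ι] [Nonempty ι] [DecidableEq ι]
    (C : Matrix ι ι ℝ) (hPD : C.PosDef) (μ : ι → ℝ) :
    (∀ S : Finset ι,
      (C.submatrix (fun i : S => (i : ι)) (fun i : S => (i : ι))).PosDef) ∧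
    (∀ S S' : Finset ι, S ⊆ S' →
      0 ≤ subSR C μ S ∧ subSR C μ S ≤ subSR C μ S' ∧
        subSR C μ S' ≤ μ ⬝ᵥ (C⁻¹ *ᵥ μ)) :=
  subSR_monotone_general C hPD μ
end

section
/- Let A be an m×m real matrix, b ∈ ℝ^m, d ∈ ℝ, and suppose the (m+1)×(m+1) block matrix Σ = fromBlocks A b bᵀ d (with d viewed as a 1×1 block) is positive definite. Let μ₁ ∈ ℝ^m, μ₂ ∈ ℝ, and set α = μ₂ − bᵀ A⁻¹ μ₁ and σ_ε = d − bᵀ A⁻¹ b. Then σ_ε > 0 and α² / σ_ε = (μ₁, μ₂)ᵀ Σ⁻¹ (μ₁, μ₂) − μ₁ᵀ A⁻¹ μ₁; that is, the squared alpha of a single added factor divided by its residual variance equals the increase in the maximal squared Sharpe ratio from adding that factor to the model. -/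
open Matrix

/-!
Write `Σ = fromBlocks A B Bᵀ D`, `S = D - Bᵀ A⁻¹ B` for the Schur complement and
`a = y - Bᵀ A⁻¹ x`. The vector `w = (A⁻¹ (x - B S⁻¹ a), S⁻¹ a)` solves `Σ w = (x, y)`, so pairing
with `(x, y)` splits the squared Sharpe ratio as `xᵀ A⁻¹ x + aᵀ S⁻¹ a`. For a single added asset
`S` is the `1 × 1` matrix `(σ_ε)`, positive because the Schur complement of a positive definite
matrix is positive definite, and `a` is the constant vector `α`.
-/

namespace Matrix

variable {ι κ : Type*}

theorem PosDef.of_fromBlocks₁₁ {R : Type*} [Ring R] [PartialOrder R] [StarRing R]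
    {A : Matrix ι ι R} {B : Matrix ι κ R} {C : Matrix κ ι R} {D : Matrix κ κ R}
    (h : (fromBlocks A B C D).PosDef) : A.PosDef :=
  h.submatrix Sum.inl_injective

theorem replicateRow_mul_mul_replicateCol [Fintype ι] {R : Type*} [CommRing R] (v w : ι → R)
    (M : Matrix ι ι R) : replicateRow κ v * M * replicateCol κ w = of fun _ _ => v ⬝ᵥ M *ᵥ w := by
  rw [Matrix.mul_assoc, ← replicateCol_mulVec, replicateRow_mul_replicateCol]

variable [Fintype ι] [Fintype κ] [DecidableEq ι]

theorem PosDef.schur_complement_fromBlocks₁₁ {K : Type*} [Field K] [PartialOrder K] [StarRing K]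
    [StarOrderedRing K] {A : Matrix ι ι K} {B : Matrix ι κ K} {D : Matrix κ κ K}
    (h : (fromBlocks A B Bᴴ D).PosDef) : (D - Bᴴ * A⁻¹ * B).PosDef := by
  have hA := h.of_fromBlocks₁₁
  let := hA.isUnit.invertible
  refine posDef_iff_dotProduct_mulVec.mpr
    ⟨(IsHermitian.fromBlocks₁₁ B D hA.isHermitian).mp h.isHermitian, fun y hy => ?_⟩
  have hxy : -((A⁻¹ * B) *ᵥ y) ⊕ᵥ y ≠ 0 := fun h0 => hy (by simpa using congrArg (· ∘ Sum.inr) h0)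
  have hpos := h.dotProduct_mulVec_pos hxy
  rwa [dotProduct_mulVec, schur_complement_eq₁₁ B D _ _ hA.isHermitian, neg_add_cancel,
    dotProduct_zero, zero_add, ← dotProduct_mulVec] at hpos

variable [DecidableEq κ] {K : Type*} [CommRing K]

theorem isUnit_det_fromBlocks_of_isUnit_det_schur {A : Matrix ι ι K}
    (hA : IsUnit A.det) (B : Matrix ι κ K) (C : Matrix κ ι K) (D : Matrix κ κ K)
    (hS : IsUnit (D - C * A⁻¹ * B).det) : IsUnit (fromBlocks A B C D).det := by
  let := A.invertibleOfIsUnitDet hA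
  rw [det_fromBlocks₁₁, invOf_eq_nonsing_inv]
  exact hA.mul hS

theorem sumElim_dotProduct_inv_fromBlocks_mulVec {A : Matrix ι ι K}
    (hA : IsUnit A.det) (hAsymm : A.IsSymm) (B : Matrix ι κ K) (D : Matrix κ κ K)
    (hS : IsUnit (D - Bᵀ * A⁻¹ * B).det) (x : ι → K) (y : κ → K) :
    (x ⊕ᵥ y) ⬝ᵥ (fromBlocks A B Bᵀ D)⁻¹ *ᵥ (x ⊕ᵥ y) =
      x ⬝ᵥ A⁻¹ *ᵥ x + (y - Bᵀ *ᵥ A⁻¹ *ᵥ x) ⬝ᵥ (D - Bᵀ * A⁻¹ * B)⁻¹ *ᵥ (y - Bᵀ *ᵥ A⁻¹ *ᵥ x) := by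
  set S := D - Bᵀ * A⁻¹ * B
  set a := y - Bᵀ *ᵥ A⁻¹ *ᵥ x
  set w := A⁻¹ *ᵥ (x - B *ᵥ S⁻¹ *ᵥ a) ⊕ᵥ S⁻¹ *ᵥ a
  have hsol : fromBlocks A B Bᵀ D *ᵥ w = x ⊕ᵥ y := by
    have hx : A *ᵥ A⁻¹ *ᵥ (x - B *ᵥ S⁻¹ *ᵥ a) + B *ᵥ S⁻¹ *ᵥ a = x := by
      rw [mulVec_mulVec, mul_nonsing_inv A hA, one_mulVec, sub_add_cancel]
    have hy : Bᵀ *ᵥ A⁻¹ *ᵥ (x - B *ᵥ S⁻¹ *ᵥ a) + D *ᵥ S⁻¹ *ᵥ a = y := by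
      have hD : D = S + Bᵀ * A⁻¹ * B := by simp [S]
      rw [hD, add_mulVec, mulVec_mulVec (M := S), mul_nonsing_inv S hS, one_mulVec]
      simp only [mulVec_sub, ← mulVec_mulVec, a]
      abel
    simp only [w, fromBlocks_mulVec, Sum.elim_comp_inl, Sum.elim_comp_inr, hx, hy]
  have hdet := isUnit_det_fromBlocks_of_isUnit_det_schur hA B Bᵀ D hS
  have hAinv : A⁻¹ᵀ = A⁻¹ := by rw [transpose_nonsing_inv, hAsymm.eq]
  have hcross : x ⬝ᵥ A⁻¹ *ᵥ B *ᵥ S⁻¹ *ᵥ a = (Bᵀ *ᵥ A⁻¹ *ᵥ x) ⬝ᵥ S⁻¹ *ᵥ a := by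
    rw [dotProduct_mulVec, ← mulVec_transpose, hAinv, dotProduct_mulVec, ← mulVec_transpose]
  rw [← hsol, mulVec_mulVec, nonsing_inv_mul _ hdet, one_mulVec, hsol, sumElim_dotProduct_sumElim,
    mulVec_sub, dotProduct_sub, hcross]
  simp only [a, sub_dotProduct]
  abel

theorem dotProduct_inv_mulVec_self_of_unique [Unique κ] {F : Type*} [Field F] (s c : F) :
    (fun _ : κ => c) ⬝ᵥ (of fun _ _ : κ => s)⁻¹ *ᵥ (fun _ => c) = c ^ 2 / s := by
  simp only [inv_subsingleton, dotProduct, Finset.univ_unique, mulVec, of_apply, Ring.inverse_eq_inv',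
    Finset.sum_singleton, diagonal_apply_eq]
  ring

end Matrix

/-- **Single-factor version of the asset pricing duality (GRS).**
Adding a single asset with mean `μ₂`, variance `d` and covariance vector `b` with the
existing factors (means `μ₁`, covariance `A`), so that the joint covariance
`fromBlocks A b bᵀ d` is positive definite, the residual variance
`σε = d − bᵀ A⁻¹ b` is positive and `α² / σε = μᵀ Σ⁻¹ μ − μ₁ᵀ A⁻¹ μ₁`
where `α = μ₂ − bᵀ A⁻¹ μ₁`. -/
theorem single_factor_alpha_sq_div_resvar_eq_sharpe_increase {m : ℕ}
    (A : Matrix (Fin m) (Fin m) ℝ) (b : Fin m → ℝ) (d : ℝ)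
    (hPD : (Matrix.fromBlocks A (Matrix.of fun i (_ : Fin 1) => b i)
        (Matrix.of fun (_ : Fin 1) j => b j)
        (Matrix.of fun (_ _ : Fin 1) => d)).PosDef)
    (μ₁ : Fin m → ℝ) (μ₂ : ℝ) :
    let α : ℝ := μ₂ - b ⬝ᵥ (A⁻¹ *ᵥ μ₁)
    let σε : ℝ := d - b ⬝ᵥ (A⁻¹ *ᵥ b)
    let μ : Fin m ⊕ Fin 1 → ℝ := Sum.elim μ₁ fun _ => μ₂
    0 < σε ∧
      α ^ 2 / σε =
        μ ⬝ᵥ ((Matrix.fromBlocks A (Matrix.of fun i (_ : Fin 1) => b i)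
          (Matrix.of fun (_ : Fin 1) j => b j)
          (Matrix.of fun (_ _ : Fin 1) => d))⁻¹ *ᵥ μ) - μ₁ ⬝ᵥ (A⁻¹ *ᵥ μ₁) := by
  intro α σε μ
  set B := replicateCol (Fin 1) b
  change (fromBlocks A B Bᴴ (of fun _ _ => d)).PosDef at hPD
  change 0 < σε ∧ α ^ 2 / σε = μ ⬝ᵥ (fromBlocks A B Bᵀ (of fun _ _ => d))⁻¹ *ᵥ μ - _
  have hA := hPD.of_fromBlocks₁₁
  have hS := hPD.schur_complement_fromBlocks₁₁
  have hSchur : (of fun _ _ => d) - Bᵀ * A⁻¹ * B = of fun _ _ => σε := by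
    rw [transpose_replicateCol, replicateRow_mul_mul_replicateCol]
    rfl
  rw [conjTranspose_eq_transpose_of_trivial, hSchur] at hS
  have key := sumElim_dotProduct_inv_fromBlocks_mulVec hA.det_pos.ne'.isUnit
    (isHermitian_iff_isSymm.mp hA.isHermitian) B (of fun _ _ => d)
    (hSchur ▸ hS.det_pos.ne'.isUnit) μ₁ (fun _ => μ₂)
  rw [hSchur] at key
  refine ⟨hS.diag_pos (i := 0), ?_⟩
  rw [key, add_sub_cancel_left]
  exact (dotProduct_inv_mulVec_self_of_unique σε α).symm
end
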